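/- arXiv:1810.02565 — 2 statements merged into one kernel-verified Lean document; each statement's English description precedes it below -/
import Mathlib

section
/- Under the SGD setup, if h ≤ 1/L then for every k ≥ 0 the ψ-weighted average of expected squared gradient norms satisfies (1/φ_{k+1}) Σ_{i=0}^k ψ_i · E[‖∇f(x_i)‖²] ≤ 2 (f(x₀) − f(x⋆)) / (h φ_{k+1}) + (h d L σ⋆² / φ_{k+1}) · Σ_{i=0}^k ψ_i² / b_i. -/
open MeasureTheory Filter
open scoped RealInnerProductSpace

/-!
Integrating the descent lemma `f y ≤ f x + ⟪∇f x, y - x⟫ + L/2 ‖y - x‖²` along the step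
`x_{i+1} = x_i - η_i G_i` and using `E⟪∇f(x_i), G_i⟫ = E‖∇f(x_i)‖²` (pull-out property of the
conditional expectation) together with `E‖G_i‖² = E‖∇f(x_i)‖² + E‖G_i - ∇f(x_i)‖²` gives, as
`L η_i ≤ 1`,
`E f(x_{i+1}) ≤ E f(x_i) - η_i/2 E‖∇f(x_i)‖² + L η_i²/2 · dσ⋆²/b_i`.
Summing telescopes, and `E f(x_{k+1}) ≥ f(x⋆)`. All expectations are finite because
`f(x⋆) ≤ f ≤ f(x⋆) + L/2 ‖· - x⋆‖²` and the iterates are square-integrable.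
-/

theorem continuous_of_norm_sub_le {F G : Type*} [SeminormedAddCommGroup F]
    [SeminormedAddCommGroup G] {g : F → G} {K : ℝ} (h : ∀ x y, ‖g x - g y‖ ≤ K * ‖x - y‖) :
    Continuous g :=
  (LipschitzWith.of_dist_le' (by simpa only [dist_eq_norm] using h)).continuous

namespace MeasureTheory

variable {Ω : Type*} {m m0 : MeasurableSpace Ω} {μ : Measure Ω}

theorem integral_le_of_ae_condExp_le [IsProbabilityMeasure μ] (hm : m ≤ m0) {g : Ω → ℝ} {c : ℝ}
    (hg : ∀ᵐ ω ∂μ, μ[g|m] ω ≤ c) : ∫ ω, g ω ∂μ ≤ c :=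
  calc ∫ ω, g ω ∂μ = ∫ ω, μ[g|m] ω ∂μ := (integral_condExp hm).symm
    _ ≤ ∫ _, c ∂μ := integral_mono_ae integrable_condExp (integrable_const c) hg
    _ = c := by simp

variable {E : Type*} [NormedAddCommGroup E] [InnerProductSpace ℝ E]

theorem MemLp.integrable_inner {X Y : Ω → E} (hX : MemLp X 2 μ) (hY : MemLp Y 2 μ) :
    Integrable (fun ω => ⟪X ω, Y ω⟫) μ :=
  memLp_one_iff_integrable.1 ((innerSL ℝ).memLp_of_bilin 1 hX hY)

variable [CompleteSpace E] [IsFiniteMeasure μ]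

theorem integral_inner_eq_integral_norm_sq_of_condExp_eq (hm : m ≤ m0) {F G : Ω → E}
    (hFm : StronglyMeasurable[m] F) (hF : MemLp F 2 μ) (hG : MemLp G 2 μ) (hcond : μ[G|m] =ᵐ[μ] F) :
    ∫ ω, ⟪F ω, G ω⟫ ∂μ = ∫ ω, ‖F ω‖ ^ 2 ∂μ :=
  calc ∫ ω, ⟪F ω, G ω⟫ ∂μ = ∫ ω, μ[fun ω => ⟪F ω, G ω⟫|m] ω ∂μ := (integral_condExp hm).symm
    _ = ∫ ω, ⟪F ω, μ[G|m] ω⟫ ∂μ :=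
        integral_congr_ae (condExp_bilin_of_stronglyMeasurable_left (innerSL ℝ) hFm
          (hF.integrable_inner hG) (hG.integrable one_le_two))
    _ = ∫ ω, ‖F ω‖ ^ 2 ∂μ :=
        integral_congr_ae (hcond.mono fun ω hω => by
          show ⟪F ω, μ[G|m] ω⟫ = ‖F ω‖ ^ 2
          rw [hω, real_inner_self_eq_norm_sq])

theorem integral_norm_sq_eq_add_integral_norm_sub_sq_of_condExp_eq (hm : m ≤ m0) {F G : Ω → E}
    (hFm : StronglyMeasurable[m] F) (hF : MemLp F 2 μ) (hG : MemLp G 2 μ) (hcond : μ[G|m] =ᵐ[μ] F) :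
    ∫ ω, ‖G ω‖ ^ 2 ∂μ = ∫ ω, ‖F ω‖ ^ 2 ∂μ + ∫ ω, ‖G ω - F ω‖ ^ 2 ∂μ := by
  have hpt : (fun ω => ‖G ω‖ ^ 2) =
      fun ω => ‖G ω - F ω‖ ^ 2 + 2 * ⟪F ω, G ω⟫ - ‖F ω‖ ^ 2 := by
    funext ω
    rw [norm_sub_sq_real, real_inner_comm]
    ring
  have hvar : Integrable (fun ω => ‖G ω - F ω‖ ^ 2) μ :=
    (hG.sub hF).integrable_norm_pow two_ne_zero
  have hcross : Integrable (fun ω => 2 * ⟪F ω, G ω⟫) μ := (hF.integrable_inner hG).const_mul 2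
  rw [hpt, integral_sub (hvar.fun_add hcross) (hF.integrable_norm_pow two_ne_zero),
    integral_add hvar hcross, integral_const_mul,
    integral_inner_eq_integral_norm_sq_of_condExp_eq hm hFm hF hG hcond]
  ring

end MeasureTheory

section Smooth

variable {E : Type*} [NormedAddCommGroup E] [InnerProductSpace ℝ E] [CompleteSpace E]
  {f : E → ℝ} {L : ℝ}

theorem hasDerivAt_apply_add_smul (hf : Differentiable ℝ f) (x v : E) (t : ℝ) :
    HasDerivAt (fun t : ℝ => f (x + t • v)) ⟪gradient f (x + t • v), v⟫ t := by
  have hline : HasDerivAt (fun t : ℝ => x + t • v) v t := by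
    simpa using ((hasDerivAt_id t).smul_const v).const_add x
  rw [inner_gradient_left]
  exact (hf _).hasFDerivAt.comp_hasDerivAt t hline

theorem apply_le_add_inner_gradient_add_half_mul_norm_sq (hf : Differentiable ℝ f)
    (hL : ∀ x y, ‖gradient f x - gradient f y‖ ≤ L * ‖x - y‖) (x y : E) :
    f y ≤ f x + ⟪gradient f x, y - x⟫ + L / 2 * ‖y - x‖ ^ 2 := by
  set v := y - x
  -- The gap between `f` and its quadratic upper model along the segment is antitone in `t ≥ 0`.
  let g : ℝ → ℝ := fun t => f (x + t • v) - t * ⟪gradient f x, v⟫ - L / 2 * t ^ 2 * ‖v‖ ^ 2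
  have hg : ∀ t,
      HasDerivAt g (⟪gradient f (x + t • v) - gradient f x, v⟫ - L * t * ‖v‖ ^ 2) t := by
    intro t
    have := (((hasDerivAt_apply_add_smul hf x v t).sub
      ((hasDerivAt_id t).mul_const ⟪gradient f x, v⟫)).sub
      (((hasDerivAt_pow 2 t).const_mul (L / 2)).mul_const (‖v‖ ^ 2)))
    refine this.congr_deriv ?_
    rw [inner_sub_left]
    ring
  have hanti : AntitoneOn g (Set.Ici 0) := by
    refine antitoneOn_of_hasDerivWithinAt_nonpos (convex_Ici 0)
      (fun t _ => (hg t).continuousAt.continuousWithinAt)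
      (fun t _ => (hg t).hasDerivWithinAt) fun t ht => ?_
    rw [interior_Ici] at ht
    calc ⟪gradient f (x + t • v) - gradient f x, v⟫ - L * t * ‖v‖ ^ 2
        ≤ L * ‖x + t • v - x‖ * ‖v‖ - L * t * ‖v‖ ^ 2 := by
          gcongr
          exact (real_inner_le_norm _ _).trans
            (mul_le_mul_of_nonneg_right (hL _ _) (norm_nonneg _))
      _ = 0 := by
          rw [add_sub_cancel_left, norm_smul, Real.norm_of_nonneg (le_of_lt ht)]
          ring
  have h01 := hanti Set.self_mem_Ici (Set.mem_Ici.2 zero_le_one) zero_le_one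
  simp only [g, v, zero_smul, one_smul, add_zero, add_sub_cancel, zero_mul, one_mul, sub_zero,
    one_pow, mul_one, ne_eq, OfNat.ofNat_ne_zero, not_false_eq_true, zero_pow, mul_zero] at h01
  linarith

theorem apply_sub_smul_le (hf : Differentiable ℝ f)
    (hL : ∀ x y, ‖gradient f x - gradient f y‖ ≤ L * ‖x - y‖) (x g : E) (η : ℝ) :
    f (x - η • g) ≤ f x - η * ⟪gradient f x, g⟫ + L / 2 * η ^ 2 * ‖g‖ ^ 2 := by
  have := apply_le_add_inner_gradient_add_half_mul_norm_sq hf hL x (x - η • g)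
  rw [sub_sub_cancel_left, inner_neg_right, real_inner_smul_right, norm_neg, norm_smul,
    mul_pow, Real.norm_eq_abs, sq_abs] at this
  linarith

theorem apply_le_apply_add_half_mul_norm_sq_of_isMin (hf : Differentiable ℝ f)
    (hL : ∀ x y, ‖gradient f x - gradient f y‖ ≤ L * ‖x - y‖) {xstar : E}
    (hmin : ∀ x, f xstar ≤ f x) (y : E) :
    f y ≤ f xstar + L / 2 * ‖y - xstar‖ ^ 2 := by
  have hgrad : gradient f xstar = 0 := by
    simp [gradient, IsLocalMin.fderiv_eq_zero (Eventually.of_forall hmin)]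
  simpa [hgrad] using apply_le_add_inner_gradient_add_half_mul_norm_sq hf hL xstar y

variable {Ω : Type*} {m0 : MeasurableSpace Ω} {μ : Measure Ω}

theorem MeasureTheory.MemLp.gradient_comp [IsFiniteMeasure μ]
    (hL : ∀ x y, ‖gradient f x - gradient f y‖ ≤ L * ‖x - y‖) {X : Ω → E} (hX : MemLp X 2 μ) :
    MemLp (fun ω => gradient f (X ω)) 2 μ := by
  refine ((memLp_const ‖gradient f 0‖).add (hX.norm.const_mul L)).of_le
    ((continuous_of_norm_sub_le hL).comp_aestronglyMeasurable hX.1) (ae_of_all _ fun ω => ?_)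
  have := hL (X ω) 0
  rw [sub_zero] at this
  calc ‖gradient f (X ω)‖ ≤ ‖gradient f 0‖ + L * ‖X ω‖ := by
        linarith [norm_le_insert' (gradient f (X ω)) (gradient f 0)]
    _ ≤ ‖‖gradient f 0‖ + L * ‖X ω‖‖ := Real.le_norm_self _

theorem MeasureTheory.MemLp.integrable_comp_of_isMin [IsFiniteMeasure μ] (hf : Differentiable ℝ f)
    (hL : ∀ x y, ‖gradient f x - gradient f y‖ ≤ L * ‖x - y‖) {xstar : E}
    (hmin : ∀ x, f xstar ≤ f x) {X : Ω → E} (hX : MemLp X 2 μ) :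
    Integrable (fun ω => f (X ω)) μ := by
  refine ((integrable_const |f xstar|).add
    (((hX.sub (memLp_const xstar)).integrable_norm_pow two_ne_zero).const_mul (L / 2))).mono'
    (hf.continuous.comp_aestronglyMeasurable hX.1) (ae_of_all _ fun ω => ?_)
  have hupper := apply_le_apply_add_half_mul_norm_sq_of_isMin hf hL hmin (X ω)
  show |f (X ω)| ≤ |f xstar| + L / 2 * ‖X ω - xstar‖ ^ 2
  rw [abs_le]
  constructor <;> linarith [hmin (X ω), neg_abs_le (f xstar), le_abs_self (f xstar)]

theorem integral_apply_sub_smul_le [IsFiniteMeasure μ] (hf : Differentiable ℝ f)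
    (hL : ∀ x y, ‖gradient f x - gradient f y‖ ≤ L * ‖x - y‖) {m : MeasurableSpace Ω}
    (hm : m ≤ m0) {X G : Ω → E} {η : ℝ}
    (hgm : StronglyMeasurable[m] fun ω => gradient f (X ω))
    (hg : MemLp (fun ω => gradient f (X ω)) 2 μ) (hG : MemLp G 2 μ)
    (hcond : μ[G|m] =ᵐ[μ] fun ω => gradient f (X ω))
    (hfX : Integrable (fun ω => f (X ω)) μ) (hfX' : Integrable (fun ω => f (X ω - η • G ω)) μ)
    (hη : 0 ≤ η) (hLη : L * η ≤ 1) :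
    ∫ ω, f (X ω - η • G ω) ∂μ ≤ ∫ ω, f (X ω) ∂μ - η / 2 * ∫ ω, ‖gradient f (X ω)‖ ^ 2 ∂μ
      + L / 2 * η ^ 2 * ∫ ω, ‖G ω - gradient f (X ω)‖ ^ 2 ∂μ := by
  have hcross : Integrable (fun ω => η * ⟪gradient f (X ω), G ω⟫) μ :=
    (hg.integrable_inner hG).const_mul η
  have hsq : Integrable (fun ω => L / 2 * η ^ 2 * ‖G ω‖ ^ 2) μ :=
    (hG.integrable_norm_pow two_ne_zero).const_mul _
  have hlin : Integrable (fun ω => f (X ω) - η * ⟪gradient f (X ω), G ω⟫) μ := hfX.sub hcross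
  have hdescent := integral_mono hfX' (hlin.fun_add hsq)
    fun ω => apply_sub_smul_le hf hL (X ω) (G ω) η
  rw [integral_add hlin hsq, integral_sub hfX hcross, integral_const_mul,
    integral_const_mul, integral_inner_eq_integral_norm_sq_of_condExp_eq hm hgm hg hG hcond,
    integral_norm_sq_eq_add_integral_norm_sub_sq_of_condExp_eq hm hgm hg hG hcond] at hdescent
  have hA : 0 ≤ ∫ ω, ‖gradient f (X ω)‖ ^ 2 ∂μ := integral_nonneg fun ω => sq_nonneg _
  nlinarith [mul_nonneg (mul_nonneg hη hA) (sub_nonneg.2 hLη)]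

end Smooth

theorem sum_range_le_sub_add_sum_of_le_sub_add {a c e : ℕ → ℝ}
    (h : ∀ i, a (i + 1) ≤ a i - c i + e i) (n : ℕ) :
    ∑ i ∈ Finset.range n, c i ≤ a 0 - a n + ∑ i ∈ Finset.range n, e i := by
  induction n with
  | zero => simp
  | succ n ih =>
    rw [Finset.sum_range_succ, Finset.sum_range_succ]
    linarith [h n]

theorem weighted_avg_le_of_forall_le_sub_add {a A ψ w : ℕ → ℝ} {h C lower : ℝ} (hh : 0 < h)
    (hψ : ∀ i, 0 < ψ i)
    (hstep : ∀ i, a (i + 1) ≤ a i - h / 2 * (ψ i * A i) + h ^ 2 * C / 2 * w i)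
    (hlower : ∀ n, lower ≤ a n) (k : ℕ) :
    (1 / ∑ i ∈ Finset.range (k + 1), ψ i) * ∑ i ∈ Finset.range (k + 1), ψ i * A i ≤
      2 * (a 0 - lower) / (h * ∑ i ∈ Finset.range (k + 1), ψ i)
        + (h * C / ∑ i ∈ Finset.range (k + 1), ψ i) * ∑ i ∈ Finset.range (k + 1), w i := by
  have htele := sum_range_le_sub_add_sum_of_le_sub_add hstep (k + 1)
  rw [← Finset.mul_sum, ← Finset.mul_sum] at htele
  have hφ : 0 < ∑ i ∈ Finset.range (k + 1), ψ i :=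
    Finset.sum_pos (fun i _ => hψ i) Finset.nonempty_range_add_one
  calc _ = 2 / (h * ∑ i ∈ Finset.range (k + 1), ψ i) *
        (h / 2 * ∑ i ∈ Finset.range (k + 1), ψ i * A i) := by
        field_simp
    _ ≤ 2 / (h * ∑ i ∈ Finset.range (k + 1), ψ i) *
        (a 0 - lower + h ^ 2 * C / 2 * ∑ i ∈ Finset.range (k + 1), w i) := by
        gcongr
        linarith [hlower (k + 1)]
    _ = _ := by
        field_simp

theorem sgd_weighted_avg_sq_grad_norm_bound_general
    {Ω : Type*} {m0 : MeasurableSpace Ω} {μ : Measure Ω} [IsProbabilityMeasure μ]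
    {d : ℕ} (f : EuclideanSpace ℝ (Fin d) → ℝ) (L : ℝ)
    (hf : ContDiff ℝ 1 f)
    (hL : ∀ x y : EuclideanSpace ℝ (Fin d), ‖gradient f x - gradient f y‖ ≤ L * ‖x - y‖)
    (xstar : EuclideanSpace ℝ (Fin d)) (hmin : ∀ x, f xstar ≤ f x)
    (ℱ : Filtration ℕ m0)
    (x G : ℕ → Ω → EuclideanSpace ℝ (Fin d))
    (x0 : EuclideanSpace ℝ (Fin d)) (hx0 : x 0 = fun _ => x0)
    (hx_meas : ∀ k, Measurable[ℱ k] (x k))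
    (σsq : ℝ)
    (b : ℕ → ℝ)
    (h : ℝ) (hh : 0 < h)
    (ψ : ℕ → ℝ) (hψpos : ∀ k, 0 < ψ k) (hψle : ∀ k, ψ k ≤ 1)
    (η : ℕ → ℝ) (hη : ∀ k, η k = h * ψ k)
    (hupdate : ∀ k ω, x (k + 1) ω = x k ω - η k • G k ω)
    (hG2 : ∀ k, MemLp (G k) 2 μ)
    (hGmean : ∀ k, μ[G k | ℱ k] =ᵐ[μ] fun ω => gradient f (x k ω))
    (hGvar : ∀ k, ∀ᵐ ω ∂μ,
      (μ[fun ω' => ‖G k ω' - gradient f (x k ω')‖ ^ 2 | ℱ k]) ω ≤ d * σsq / b k)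
    (hhL : h ≤ 1 / L)
    (k : ℕ) :
    (1 / ∑ i ∈ Finset.range (k + 1), ψ i) *
        ∑ i ∈ Finset.range (k + 1), ψ i * ∫ ω, ‖gradient f (x i ω)‖ ^ 2 ∂μ ≤
      2 * (f x0 - f xstar) / (h * ∑ i ∈ Finset.range (k + 1), ψ i)
        + (h * d * L * σsq / ∑ i ∈ Finset.range (k + 1), ψ i) *
            ∑ i ∈ Finset.range (k + 1), ψ i ^ 2 / b i := by
  have hL0 : 0 < L := one_div_pos.1 (hh.trans_le hhL)
  have hdiff : Differentiable ℝ f := hf.differentiable one_ne_zero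
  have hx2 : ∀ i, MemLp (x i) 2 μ := by
    intro i
    induction i with
    | zero => rw [hx0]; exact memLp_const x0
    | succ i ih => rw [funext (hupdate i)]; exact ih.sub ((hG2 i).const_smul (η i))
  have hfx : ∀ i, Integrable (fun ω => f (x i ω)) μ :=
    fun i => (hx2 i).integrable_comp_of_isMin hdiff hL hmin
  have hstep : ∀ i, ∫ ω, f (x (i + 1) ω) ∂μ ≤ ∫ ω, f (x i ω) ∂μ
      - h / 2 * (ψ i * ∫ ω, ‖gradient f (x i ω)‖ ^ 2 ∂μ)
      + h ^ 2 * (d * L * σsq) / 2 * (ψ i ^ 2 / b i) := by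
    intro i
    have hLη : L * η i ≤ 1 := by
      rw [hη, ← mul_assoc]
      nlinarith [(le_div_iff₀' hL0).1 hhL, hψpos i, hψle i]
    have hgm : StronglyMeasurable[ℱ i] fun ω => gradient f (x i ω) :=
      (continuous_of_norm_sub_le hL).comp_stronglyMeasurable (hx_meas i).stronglyMeasurable
    have hdescent := integral_apply_sub_smul_le hdiff hL (ℱ.le i) hgm
      ((hx2 i).gradient_comp hL) (hG2 i) (hGmean i) (hfx i)
      (by simpa only [hupdate] using hfx (i + 1)) (by rw [hη]; exact (mul_pos hh (hψpos i)).le) hLη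
    have hvar := mul_le_mul_of_nonneg_left (integral_le_of_ae_condExp_le (ℱ.le i) (hGvar i))
      (by positivity : 0 ≤ L / 2 * η i ^ 2)
    simp only [← hupdate] at hdescent
    rw [hη] at hdescent hvar
    linear_combination hdescent + hvar
  have hlower : ∀ n, f xstar ≤ ∫ ω, f (x n ω) ∂μ := fun n => by
    simpa using integral_mono (integrable_const (f xstar)) (hfx n) fun ω => hmin _
  have hfirst : ∫ ω, f (x 0 ω) ∂μ = f x0 := by simp [hx0]
  simpa only [hfirst, mul_assoc] using weighted_avg_le_of_forall_le_sub_add hh hψpos hstep hlower k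

/-- **Randomized-iterate guarantee for mini-batch SGD on smooth functions.**
If `h ≤ 1/L` then for every `k`, with `φ_{k+1} = Σ_{i=0}^k ψ_i`,
`(1/φ_{k+1}) Σ_{i=0}^k ψ_i E[‖∇f(x_i)‖²]
  ≤ 2(f(x₀) − f(x⋆))/(h φ_{k+1}) + (h d L σ⋆²/φ_{k+1}) Σ_{i=0}^k ψ_i²/b_i`. -/
theorem sgd_weighted_avg_sq_grad_norm_bound
    {Ω : Type*} {m0 : MeasurableSpace Ω} {μ : Measure Ω} [IsProbabilityMeasure μ]
    {d : ℕ} (f : EuclideanSpace ℝ (Fin d) → ℝ) (L : ℝ)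
    (hf : ContDiff ℝ 1 f)
    (hL : ∀ x y : EuclideanSpace ℝ (Fin d), ‖gradient f x - gradient f y‖ ≤ L * ‖x - y‖)
    (xstar : EuclideanSpace ℝ (Fin d)) (hmin : ∀ x, f xstar ≤ f x)
    (ℱ : Filtration ℕ m0)
    (x G : ℕ → Ω → EuclideanSpace ℝ (Fin d))
    (x0 : EuclideanSpace ℝ (Fin d)) (hx0 : x 0 = fun _ => x0)
    (hx_meas : ∀ k, Measurable[ℱ k] (x k))
    (σsq : ℝ) (hσsq : 0 ≤ σsq)
    (b : ℕ → ℝ) (hb : ∀ k, 1 ≤ b k)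
    (h : ℝ) (hh : 0 < h)
    (ψ : ℕ → ℝ) (hψpos : ∀ k, 0 < ψ k) (hψle : ∀ k, ψ k ≤ 1)
    (hψ0 : ψ 0 = 1) (hψmono : ∀ k, ψ (k + 1) ≤ ψ k)
    (η : ℕ → ℝ) (hη : ∀ k, η k = h * ψ k)
    (hupdate : ∀ k ω, x (k + 1) ω = x k ω - η k • G k ω)
    (hG2 : ∀ k, MemLp (G k) 2 μ)
    (hGmean : ∀ k, μ[G k | ℱ k] =ᵐ[μ] fun ω => gradient f (x k ω))
    (hGvar : ∀ k, ∀ᵐ ω ∂μ,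
      (μ[fun ω' => ‖G k ω' - gradient f (x k ω')‖ ^ 2 | ℱ k]) ω ≤ d * σsq / b k)
    (hhL : h ≤ 1 / L)
    (k : ℕ) :
    (1 / ∑ i ∈ Finset.range (k + 1), ψ i) *
        ∑ i ∈ Finset.range (k + 1), ψ i * ∫ ω, ‖gradient f (x i ω)‖ ^ 2 ∂μ ≤
      2 * (f x0 - f xstar) / (h * ∑ i ∈ Finset.range (k + 1), ψ i)
        + (h * d * L * σsq / ∑ i ∈ Finset.range (k + 1), ψ i) *
            ∑ i ∈ Finset.range (k + 1), ψ i ^ 2 / b i :=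
  sgd_weighted_avg_sq_grad_norm_bound_general f L hf hL xstar hmin ℱ x G x0 hx0 hx_meas σsq b h hh ψ
    hψpos hψle η hη hupdate hG2 hGmean hGvar hhL k
end

section
/- Let f₁, …, f_N : ℝ^d → ℝ each be differentiable and L-smooth, f = (1/N) Σ_{i=1}^N f_i, and x⋆ a point with ∇f(x⋆) = 0. Then for all x, y ∈ ℝ^d, the second moment of the SVRG estimator satisfies (1/N) Σ_{i=1}^N ‖∇f_i(x) − ∇f_i(y) + ∇f(y)‖² ≤ 2L² ‖x − x⋆‖² + 2L² ‖y − x⋆‖², and the same bound holds for (1/N) Σ_{i=1}^N ‖∇f_i(x) − ∇f_i(y) + ∇f(y) − ∇f(x)‖². -/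
/-!
Write `a i = ∇fᵢ(x) − ∇fᵢ(x⋆)` and `b i = ∇fᵢ(y) − ∇fᵢ(x⋆)`. Since `∇f(x⋆) = 0`, the SVRG
estimator is `a i − (b i − ∇f(y))`, and `∇f(y)` is the mean of the `b i`. Hence
`‖estimator‖² ≤ 2‖a i‖² + 2‖b i − ∇f(y)‖²`, the centred term averages to at most the mean of
`‖b i‖²`, and smoothness bounds `‖a i‖ ≤ L‖x − x⋆‖`, `‖b i‖ ≤ L‖y − x⋆‖`. The estimator itself
has mean `∇f(x)`, so centring it once more can only lower its second moment.
-/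

open Finset

section Gradient

variable {F : Type*} [NormedAddCommGroup F] [InnerProductSpace ℝ F] [CompleteSpace F]

theorem HasGradientAt.fun_sum {ι : Type*} {u : Finset ι} {A : ι → F → ℝ} {A' : ι → F} {x : F}
    (h : ∀ i ∈ u, HasGradientAt (A i) (A' i) x) :
    HasGradientAt (fun y => ∑ i ∈ u, A i y) (∑ i ∈ u, A' i) x := by
  rw [hasGradientAt_iff_hasFDerivAt, map_sum]
  exact HasFDerivAt.fun_sum fun i hi => (h i hi).hasFDerivAt

theorem HasGradientAt.const_mul {f : F → ℝ} {f' x : F} (h : HasGradientAt f f' x) (c : ℝ) :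
    HasGradientAt (fun y => c * f y) (c • f') x := by
  rw [hasGradientAt_iff_hasFDerivAt, map_smul]
  exact h.hasFDerivAt.const_mul c

end Gradient

section SecondMoment

variable {ι E : Type*} [Fintype ι] [NormedAddCommGroup E] {G : ι → E → E} {g : E → E} {L : ℝ}

theorem norm_sub_sq_le_two_mul_add (u w : E) :
    ‖u - w‖ ^ 2 ≤ 2 * ‖u‖ ^ 2 + 2 * ‖w‖ ^ 2 := by
  nlinarith [norm_sub_le u w, norm_nonneg (u - w), sq_nonneg (‖u‖ - ‖w‖)]

theorem sum_norm_sub_sq_le_of_lipschitz (hG : ∀ i x y, ‖G i x - G i y‖ ≤ L * ‖x - y‖) (x y : E) :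
    ∑ i, ‖G i x - G i y‖ ^ 2 ≤ Fintype.card ι * (L ^ 2 * ‖x - y‖ ^ 2) := by
  calc ∑ i, ‖G i x - G i y‖ ^ 2 ≤ ∑ _i : ι, (L * ‖x - y‖) ^ 2 :=
        sum_le_sum fun i _ => pow_le_pow_left₀ (norm_nonneg _) (hG i x y) 2
    _ = Fintype.card ι * (L ^ 2 * ‖x - y‖ ^ 2) := by
        rw [sum_const, card_univ, nsmul_eq_mul, mul_pow]

variable [InnerProductSpace ℝ E]

theorem sum_norm_sub_mean_sq (v : ι → E) {m : E} (hm : ∑ i, v i = (Fintype.card ι : ℝ) • m) :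
    ∑ i, ‖v i - m‖ ^ 2 = ∑ i, ‖v i‖ ^ 2 - Fintype.card ι * ‖m‖ ^ 2 := by
  simp only [norm_sub_sq_real, sum_add_distrib, sum_sub_distrib, ← mul_sum, ← sum_inner, hm,
    real_inner_smul_left, real_inner_self_eq_norm_sq, sum_const, card_univ, nsmul_eq_mul]
  ring

theorem sum_norm_sub_mean_sq_le (v : ι → E) {m : E} (hm : ∑ i, v i = (Fintype.card ι : ℝ) • m) :
    ∑ i, ‖v i - m‖ ^ 2 ≤ ∑ i, ‖v i‖ ^ 2 := by
  rw [sum_norm_sub_mean_sq v hm]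
  have : 0 ≤ (Fintype.card ι : ℝ) * ‖m‖ ^ 2 := by positivity
  linarith

theorem sum_norm_svrg_sq_le (hG : ∀ i x y, ‖G i x - G i y‖ ≤ L * ‖x - y‖)
    (hg : ∀ z, ∑ i, G i z = (Fintype.card ι : ℝ) • g z) {xstar : E} (hstar : g xstar = 0)
    (x y : E) :
    ∑ i, ‖G i x - G i y + g y‖ ^ 2 ≤
      Fintype.card ι * (2 * L ^ 2 * ‖x - xstar‖ ^ 2 + 2 * L ^ 2 * ‖y - xstar‖ ^ 2) := by
  have hsplit : ∀ i, G i x - G i y + g y = (G i x - G i xstar) - ((G i y - G i xstar) - g y) :=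
    fun i => by abel
  have hmean : ∑ i, (G i y - G i xstar) = (Fintype.card ι : ℝ) • g y := by
    rw [sum_sub_distrib, hg, hg, hstar, smul_zero, sub_zero]
  have hx := sum_norm_sub_sq_le_of_lipschitz hG x xstar
  have hy := sum_norm_sub_sq_le_of_lipschitz hG y xstar
  have hcentred := sum_norm_sub_mean_sq_le (fun i => G i y - G i xstar) hmean
  calc ∑ i, ‖G i x - G i y + g y‖ ^ 2
      ≤ ∑ i, (2 * ‖G i x - G i xstar‖ ^ 2 + 2 * ‖(G i y - G i xstar) - g y‖ ^ 2) :=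
        sum_le_sum fun i _ => hsplit i ▸ norm_sub_sq_le_two_mul_add _ _
    _ = 2 * ∑ i, ‖G i x - G i xstar‖ ^ 2 + 2 * ∑ i, ‖(G i y - G i xstar) - g y‖ ^ 2 := by
        rw [sum_add_distrib, mul_sum, mul_sum]
    _ ≤ _ := by linarith

theorem sum_norm_svrg_sub_mean_sq_le (hg : ∀ z, ∑ i, G i z = (Fintype.card ι : ℝ) • g z)
    (x y : E) :
    ∑ i, ‖G i x - G i y + g y - g x‖ ^ 2 ≤ ∑ i, ‖G i x - G i y + g y‖ ^ 2 := by
  refine sum_norm_sub_mean_sq_le (fun i => G i x - G i y + g y) ?_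
  rw [sum_add_distrib, sum_sub_distrib, hg, hg, sum_const, card_univ, ← Nat.cast_smul_eq_nsmul ℝ,
    sub_add_cancel]

end SecondMoment

/-- **Second-moment bound for the SVRG gradient estimator under smoothness.** Let
`f = (1/N) Σᵢ fᵢ` with each `fᵢ` differentiable and `L`-smooth, and let `x⋆` satisfy
`∇f(x⋆) = 0`. Then for all `x, y`, the second moment of the SVRG estimator
`∇fᵢ(x) − ∇fᵢ(y) + ∇f(y)` satisfies
`(1/N) Σᵢ ‖∇fᵢ(x) − ∇fᵢ(y) + ∇f(y)‖² ≤ 2L²‖x − x⋆‖² + 2L²‖y − x⋆‖²`,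
and the same bound holds for `(1/N) Σᵢ ‖∇fᵢ(x) − ∇fᵢ(y) + ∇f(y) − ∇f(x)‖²`. -/
theorem svrg_estimator_second_moment_bound
    {d N : ℕ} (hN : 0 < N)
    (fs : Fin N → EuclideanSpace ℝ (Fin d) → ℝ) (L : ℝ)
    (hdiff : ∀ i, Differentiable ℝ (fs i))
    (hLs : ∀ i, ∀ x y : EuclideanSpace ℝ (Fin d),
      ‖gradient (fs i) x - gradient (fs i) y‖ ≤ L * ‖x - y‖)
    (f : EuclideanSpace ℝ (Fin d) → ℝ)
    (hf : ∀ z, f z = (1 / (N : ℝ)) * ∑ i, fs i z)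
    (xstar : EuclideanSpace ℝ (Fin d)) (hstar : gradient f xstar = 0)
    (x y : EuclideanSpace ℝ (Fin d)) :
    (1 / (N : ℝ)) * ∑ i, ‖gradient (fs i) x - gradient (fs i) y + gradient f y‖ ^ 2 ≤
      2 * L ^ 2 * ‖x - xstar‖ ^ 2 + 2 * L ^ 2 * ‖y - xstar‖ ^ 2 ∧
    (1 / (N : ℝ)) *
        ∑ i, ‖gradient (fs i) x - gradient (fs i) y + gradient f y - gradient f x‖ ^ 2 ≤
      2 * L ^ 2 * ‖x - xstar‖ ^ 2 + 2 * L ^ 2 * ‖y - xstar‖ ^ 2 := by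
  have hN' : (N : ℝ) ≠ 0 := by positivity
  obtain rfl : f = fun z => (1 / (N : ℝ)) * ∑ i, fs i z := funext hf
  have hmean : ∀ z, ∑ i, gradient (fs i) z =
      (Fintype.card (Fin N) : ℝ) • gradient (fun z => (1 / (N : ℝ)) * ∑ i, fs i z) z := by
    intro z
    rw [((HasGradientAt.fun_sum fun i _ => (hdiff i z).hasGradientAt).const_mul _).gradient,
      smul_smul, Fintype.card_fin, mul_one_div_cancel hN', one_smul]
  have hbound := sum_norm_svrg_sq_le hLs hmean hstar x y
  have hcentred := sum_norm_svrg_sub_mean_sq_le hmean x y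
  rw [Fintype.card_fin] at hbound
  rw [one_div_mul_eq_div, one_div_mul_eq_div, div_le_iff₀' (by positivity),
    div_le_iff₀' (by positivity)]
  exact ⟨hbound, hcentred.trans hbound⟩
end
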